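/- Let f : ℝ^d → ℝ be twice continuously differentiable with L_H-Lipschitz continuous Hessian. Let x ∈ ℝ^d, g = ∇f(x), H = ∇²f(x), and suppose d ∈ ℝ^d is nonzero and satisfies ⟨d, g⟩ = −‖d‖² and ⟨d, Hd⟩ ≤ 0. Let 0 < ρ < 1. Then every step-size α with 0 < α ≤ √(6(1 − ρ)/(L_H‖d‖)) satisfies the Armijo condition f(x + αd) ≤ f(x) + ρα⟨g, d⟩; consequently, with α* = √(6(1 − ρ)/(L_H‖d‖)), one has f(x + α*d) ≤ f(x) − ρ·√(6(1 − ρ)/L_H)·‖d‖^{3/2}. -/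

import Mathlib

open scoped RealInnerProductSpace

/-- The Hessian of `f : ℝ^d → ℝ` at `x`, as the derivative of the gradient. -/
noncomputable def hessian {d : ℕ} (f : EuclideanSpace ℝ (Fin d) → ℝ)
    (x : EuclideanSpace ℝ (Fin d)) :
    EuclideanSpace ℝ (Fin d) →L[ℝ] EuclideanSpace ℝ (Fin d) :=
  fderiv ℝ (gradient f) x

/-!
Along the ray `t ↦ x + t • v`, the second derivative of `f` exceeds its value `⟪v, H v⟫ ≤ 0`
at `t = 0` by at most `L_H ‖v‖³ t`, so integrating twice gives the cubic model
`f (x + α • v) ≤ f x - α ‖v‖² + L_H ‖v‖³ α³ / 6`. The cubic term is absorbed into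
`(1 - ρ) α ‖v‖²` exactly when `L_H ‖v‖ α² ≤ 6 (1 - ρ)`, which is the step-size bound; at the
largest step, `α ‖v‖² = √(6 (1 - ρ) / L_H) ‖v‖^{3/2}`.
-/

lemma le_of_hasDerivAt_le_of_nonneg {u w u' w' : ℝ → ℝ} (hu : ∀ t, HasDerivAt u (u' t) t)
    (hw : ∀ t, HasDerivAt w (w' t) t) (h0 : u 0 ≤ w 0) (h' : ∀ t, 0 ≤ t → u' t ≤ w' t)
    {t : ℝ} (ht : 0 ≤ t) : u t ≤ w t :=
  image_le_of_deriv_right_le_deriv_boundary (fun s _ => (hu s).continuousAt.continuousWithinAt)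
    (fun s _ => (hu s).hasDerivWithinAt) h0 (fun s _ => (hw s).continuousAt.continuousWithinAt)
    (fun s _ => (hw s).hasDerivWithinAt) (fun s hs => h' s hs.1) ⟨ht, le_rfl⟩

lemma le_cubic_taylor_of_deriv2_le {φ φ' φ'' : ℝ → ℝ} {M : ℝ}
    (hφ : ∀ t, HasDerivAt φ (φ' t) t) (hφ' : ∀ t, HasDerivAt φ' (φ'' t) t)
    (hM : ∀ t, 0 ≤ t → φ'' t ≤ φ'' 0 + M * t) {t : ℝ} (ht : 0 ≤ t) :
    φ t ≤ φ 0 + t * φ' 0 + t ^ 2 / 2 * φ'' 0 + M / 6 * t ^ 3 := by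
  have hquad : ∀ s, HasDerivAt (fun s => φ' 0 + s * φ'' 0 + M / 2 * s ^ 2)
      (φ'' 0 + M * s) s := fun s =>
    ((((hasDerivAt_id' s).mul_const (φ'' 0)).const_add (φ' 0)).fun_add
      ((hasDerivAt_pow 2 s).const_mul (M / 2))).congr_deriv (by norm_num; ring)
  have hcubic : ∀ s, HasDerivAt (fun s => φ 0 + s * φ' 0 + s ^ 2 / 2 * φ'' 0 + M / 6 * s ^ 3)
      (φ' 0 + s * φ'' 0 + M / 2 * s ^ 2) s := fun s =>
    (((((hasDerivAt_id' s).mul_const (φ' 0)).const_add (φ 0)).fun_add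
      (((hasDerivAt_pow 2 s).div_const 2).mul_const (φ'' 0))).fun_add
      ((hasDerivAt_pow 3 s).const_mul (M / 6))).congr_deriv (by norm_num; ring)
  have hφ'_le : ∀ s, 0 ≤ s → φ' s ≤ φ' 0 + s * φ'' 0 + M / 2 * s ^ 2 := fun s hs =>
    le_of_hasDerivAt_le_of_nonneg hφ' hquad (by simp) hM hs
  exact le_of_hasDerivAt_le_of_nonneg hφ hcubic (by simp) hφ'_le ht

lemma hasDerivAt_add_smul {E : Type*} [NormedAddCommGroup E] [NormedSpace ℝ E]
    (x v : E) (t : ℝ) : HasDerivAt (fun t : ℝ => x + t • v) v t := by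
  simpa using ((hasDerivAt_id t).smul_const v).const_add x

section InnerProductSpace

variable {E : Type*} [NormedAddCommGroup E] [InnerProductSpace ℝ E] [CompleteSpace E]

lemma ContDiff.differentiable_gradient {f : E → ℝ} (hf : ContDiff ℝ 2 f) :
    Differentiable ℝ (gradient f) := by
  have hdf : Differentiable ℝ (fderiv ℝ f) :=
    (hf.fderiv_right (m := 1) (by norm_num)).differentiable one_ne_zero
  exact (InnerProductSpace.toDual ℝ E).symm.differentiable.comp hdf

lemma hasDerivAt_comp_add_smul {f : E → ℝ} (hf : Differentiable ℝ f) (x v : E) (t : ℝ) :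
    HasDerivAt (fun t : ℝ => f (x + t • v)) ⟪gradient f (x + t • v), v⟫ t := by
  have hcomp := (hf (x + t • v)).hasFDerivAt.comp_hasDerivAt t (hasDerivAt_add_smul x v t)
  rw [← inner_gradient_left] at hcomp
  exact hcomp

lemma hasDerivAt_inner_gradient_comp_add_smul {f : E → ℝ} (hf : ContDiff ℝ 2 f) (x v : E)
    (t : ℝ) :
    HasDerivAt (fun t : ℝ => ⟪gradient f (x + t • v), v⟫)
      ⟪v, fderiv ℝ (gradient f) (x + t • v) v⟫ t := by
  have hgrad := (hf.differentiable_gradient (x + t • v)).hasFDerivAt.comp_hasDerivAt t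
    (hasDerivAt_add_smul x v t)
  simpa [real_inner_comm v] using hgrad.inner ℝ (hasDerivAt_const t v)

lemma inner_fderiv_gradient_add_smul_le {f : E → ℝ} {L : ℝ}
    (hLip : ∀ y z, ‖fderiv ℝ (gradient f) y - fderiv ℝ (gradient f) z‖ ≤ L * ‖y - z‖)
    (x v : E) {t : ℝ} (ht : 0 ≤ t) :
    ⟪v, fderiv ℝ (gradient f) (x + t • v) v⟫ ≤
      ⟪v, fderiv ℝ (gradient f) x v⟫ + L * ‖v‖ ^ 3 * t := by
  set D := fderiv ℝ (gradient f) (x + t • v) - fderiv ℝ (gradient f) x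
  have hD : ‖D‖ ≤ L * (t * ‖v‖) := by
    simpa [norm_smul, abs_of_nonneg ht] using hLip (x + t • v) x
  have hDv : ⟪v, D v⟫ ≤ ‖v‖ ^ 2 * (L * (t * ‖v‖)) :=
    calc ⟪v, D v⟫ ≤ ‖v‖ * (‖D‖ * ‖v‖) :=
          (real_inner_le_norm _ _).trans (by gcongr; exact D.le_opNorm v)
      _ ≤ ‖v‖ ^ 2 * (L * (t * ‖v‖)) := by nlinarith [norm_nonneg v, sq_nonneg ‖v‖]
  simp only [D, sub_apply, inner_sub_right] at hDv
  linarith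

theorem le_cubic_taylor_of_lipschitz_hessian {f : E → ℝ} {L : ℝ} (hf : ContDiff ℝ 2 f)
    (hLip : ∀ y z, ‖fderiv ℝ (gradient f) y - fderiv ℝ (gradient f) z‖ ≤ L * ‖y - z‖)
    (x v : E) {t : ℝ} (ht : 0 ≤ t) :
    f (x + t • v) ≤ f x + t * ⟪gradient f x, v⟫ + t ^ 2 / 2 * ⟪v, fderiv ℝ (gradient f) x v⟫ +
      L * ‖v‖ ^ 3 / 6 * t ^ 3 := by
  simpa using le_cubic_taylor_of_deriv2_le
    (hasDerivAt_comp_add_smul (hf.differentiable two_ne_zero) x v)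
    (hasDerivAt_inner_gradient_comp_add_smul hf x v)
    (fun s hs => by simpa using inner_fderiv_gradient_add_smul_le hLip x v hs) ht

theorem armijo_of_nonpos_curvature {f : E → ℝ} {L ρ : ℝ} (hf : ContDiff ℝ 2 f)
    (hLip : ∀ y z, ‖fderiv ℝ (gradient f) y - fderiv ℝ (gradient f) z‖ ≤ L * ‖y - z‖)
    {x v : E} (hdg : ⟪gradient f x, v⟫ = -‖v‖ ^ 2)
    (hcurv : ⟪v, fderiv ℝ (gradient f) x v⟫ ≤ 0) {α : ℝ} (hα : 0 ≤ α)
    (hstep : L * ‖v‖ * α ^ 2 ≤ 6 * (1 - ρ)) :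
    f (x + α • v) ≤ f x + ρ * α * ⟪gradient f x, v⟫ := by
  have htaylor := le_cubic_taylor_of_lipschitz_hessian hf hLip x v hα
  have hcubic : L * ‖v‖ ^ 3 / 6 * α ^ 3 ≤ (1 - ρ) * α * ‖v‖ ^ 2 := by
    have := mul_le_mul_of_nonneg_left hstep (by positivity : 0 ≤ α * ‖v‖ ^ 2 / 6)
    linarith
  have hquad : α ^ 2 / 2 * ⟪v, fderiv ℝ (gradient f) x v⟫ ≤ 0 :=
    mul_nonpos_of_nonneg_of_nonpos (by positivity) hcurv
  rw [hdg] at htaylor ⊢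
  linarith

end InnerProductSpace

lemma mul_sq_le_of_le_sqrt_div {a b α : ℝ} (hb : 0 < b) (hα : 0 < α) (h : α ≤ √(a / b)) :
    b * α ^ 2 ≤ a := by
  rw [Real.le_sqrt' hα, le_div_iff₀ hb] at h
  linarith

lemma sqrt_div_mul_mul_sq {c L n : ℝ} (hn : 0 < n) :
    √(c / (L * n)) * n ^ 2 = √(c / L) * n ^ ((3 : ℝ) / 2) := by
  have hpow : n ^ ((3 : ℝ) / 2) = n ^ 2 / √n := by
    rw [Real.sqrt_eq_rpow, ← Real.rpow_natCast n 2, ← Real.rpow_sub hn]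
    norm_num
  rw [← div_div, Real.sqrt_div' _ hn.le, hpow]
  ring

theorem npc_direction_decrease_general {d : ℕ} (f : EuclideanSpace ℝ (Fin d) → ℝ)
    (LH ρ : ℝ) (hLH : 0 < LH) (hρ1 : ρ < 1)
    (hf : ContDiff ℝ 2 f)
    (hLip : ∀ x y : EuclideanSpace ℝ (Fin d), ‖hessian f x - hessian f y‖ ≤ LH * ‖x - y‖)
    (x v : EuclideanSpace ℝ (Fin d)) (hv : v ≠ 0)
    (hdg : ⟪v, gradient f x⟫ = -‖v‖ ^ 2)
    (hcurv : ⟪v, hessian f x v⟫ ≤ 0) :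
    (∀ α : ℝ, 0 < α → α ≤ Real.sqrt (6 * (1 - ρ) / (LH * ‖v‖)) →
      f (x + α • v) ≤ f x + ρ * α * ⟪gradient f x, v⟫) ∧
    f (x + Real.sqrt (6 * (1 - ρ) / (LH * ‖v‖)) • v) ≤
      f x - ρ * Real.sqrt (6 * (1 - ρ) / LH) * ‖v‖ ^ ((3 : ℝ) / 2) := by
  have hn : 0 < ‖v‖ := norm_pos_iff.2 hv
  have hgv : ⟪gradient f x, v⟫ = -‖v‖ ^ 2 := by rwa [real_inner_comm]
  have armijo : ∀ α : ℝ, 0 < α → α ≤ Real.sqrt (6 * (1 - ρ) / (LH * ‖v‖)) →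
      f (x + α • v) ≤ f x + ρ * α * ⟪gradient f x, v⟫ := fun α hα hαle =>
    armijo_of_nonpos_curvature hf hLip hgv hcurv hα.le
      (mul_sq_le_of_le_sqrt_div (by positivity) hα hαle)
  refine ⟨armijo, ?_⟩
  have hmax : 0 < Real.sqrt (6 * (1 - ρ) / (LH * ‖v‖)) :=
    Real.sqrt_pos.2 (div_pos (by linarith) (by positivity))
  calc f (x + Real.sqrt (6 * (1 - ρ) / (LH * ‖v‖)) • v)
      ≤ f x + ρ * Real.sqrt (6 * (1 - ρ) / (LH * ‖v‖)) * ⟪gradient f x, v⟫ :=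
        armijo _ hmax le_rfl
    _ = f x - ρ * (Real.sqrt (6 * (1 - ρ) / (LH * ‖v‖)) * ‖v‖ ^ 2) := by rw [hgv]; ring
    _ = f x - ρ * Real.sqrt (6 * (1 - ρ) / LH) * ‖v‖ ^ ((3 : ℝ) / 2) := by
      rw [sqrt_div_mul_mul_sq hn]; ring

/-- Armijo line-search guarantee and worst-case decrease for a nonpositive-curvature
direction. -/
theorem npc_direction_decrease {d : ℕ} (f : EuclideanSpace ℝ (Fin d) → ℝ)
    (LH ρ : ℝ) (hLH : 0 < LH) (hρ0 : 0 < ρ) (hρ1 : ρ < 1)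
    (hf : ContDiff ℝ 2 f)
    (hLip : ∀ x y : EuclideanSpace ℝ (Fin d), ‖hessian f x - hessian f y‖ ≤ LH * ‖x - y‖)
    (x v : EuclideanSpace ℝ (Fin d)) (hv : v ≠ 0)
    (hdg : ⟪v, gradient f x⟫ = -‖v‖ ^ 2)
    (hcurv : ⟪v, hessian f x v⟫ ≤ 0) :
    (∀ α : ℝ, 0 < α → α ≤ Real.sqrt (6 * (1 - ρ) / (LH * ‖v‖)) →
      f (x + α • v) ≤ f x + ρ * α * ⟪gradient f x, v⟫) ∧
    f (x + Real.sqrt (6 * (1 - ρ) / (LH * ‖v‖)) • v) ≤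
      f x - ρ * Real.sqrt (6 * (1 - ρ) / LH) * ‖v‖ ^ ((3 : ℝ) / 2) :=
  npc_direction_decrease_general f LH ρ hLH hρ1 hf hLip x v hv hdg hcurv
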